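/- arXiv:1903.07470 — 6 statements merged into one kernel-verified Lean document; each statement's English description precedes it below -/
import Mathlib

section
/- With Γ(ρ) = 2Re(ρ₂,₃) + 2Re(ρ₁,₄), the following set identities hold: S_Ψ ∩ R₊ = {Ψ₊Ψ₊*}, S_Ψ ∩ R₋ = {Ψ₋Ψ₋*}, S_Φ ∩ R₊ = {Φ₊Φ₊*}, and S_Φ ∩ R₋ = {Φ₋Φ₋*}. Equivalently, a state ρ ∈ S satisfies Λ₂(ρ) = 0 and Γ(ρ) = ±1 if and only if ρ = Ψ±Ψ±*, and it satisfies Λ₁(ρ) = 0 and Γ(ρ) = ±1 if and only if ρ = Φ±Φ±*. -/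
open Matrix ComplexOrder

noncomputable section

/-- Pauli matrices. -/
def σx : Matrix (Fin 2) (Fin 2) ℂ := !![0, 1; 1, 0]
def σy : Matrix (Fin 2) (Fin 2) ℂ := !![0, -Complex.I; Complex.I, 0]
def σz : Matrix (Fin 2) (Fin 2) ℂ := !![1, 0; 0, -1]
def id2 : Matrix (Fin 2) (Fin 2) ℂ := 1

/-- Kronecker product of two `2 × 2` matrices, indexed by `Fin 4`
(with the identification `(i,k) ↦ 2*i + k`). -/
def kron (A B : Matrix (Fin 2) (Fin 2) ℂ) : Matrix (Fin 4) (Fin 4) ℂ :=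
  fun i j => A ⟨i.val / 2, by omega⟩ ⟨j.val / 2, by omega⟩ *
             B ⟨i.val % 2, by omega⟩ ⟨j.val % 2, by omega⟩

/-- The measurement matrices `L_z = σ_z ⊗ σ_z` and `L_x = σ_x ⊗ σ_x`. -/
def Lz : Matrix (Fin 4) (Fin 4) ℂ := kron σz σz
def Lx : Matrix (Fin 4) (Fin 4) ℂ := kron σx σx

/-- The Bell vectors. -/
def PsiPlus : Fin 4 → ℂ := ![(Real.sqrt 2 : ℂ)⁻¹, 0, 0, (Real.sqrt 2 : ℂ)⁻¹]
def PsiMinus : Fin 4 → ℂ := ![(Real.sqrt 2 : ℂ)⁻¹, 0, 0, -(Real.sqrt 2 : ℂ)⁻¹]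
def PhiPlus : Fin 4 → ℂ := ![0, (Real.sqrt 2 : ℂ)⁻¹, (Real.sqrt 2 : ℂ)⁻¹, 0]
def PhiMinus : Fin 4 → ℂ := ![0, (Real.sqrt 2 : ℂ)⁻¹, -(Real.sqrt 2 : ℂ)⁻¹, 0]

/-- The rank-one projection `ξξ*`. -/
def outer (ξ : Fin 4 → ℂ) : Matrix (Fin 4) (Fin 4) ℂ := Matrix.vecMulVec ξ (star ξ)

/-- The set of the four Bell states. -/
def BellStates : Set (Matrix (Fin 4) (Fin 4) ℂ) :=
  {outer PsiPlus, outer PsiMinus, outer PhiPlus, outer PhiMinus}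

/-- The state space `S`. -/
def IsState (ρ : Matrix (Fin 4) (Fin 4) ℂ) : Prop := ρ.PosSemidef ∧ ρ.trace = 1

def Λ₁ (ρ : Matrix (Fin 4) (Fin 4) ℂ) : ℝ := (ρ 0 0).re + (ρ 3 3).re
def Λ₂ (ρ : Matrix (Fin 4) (Fin 4) ℂ) : ℝ := (ρ 1 1).re + (ρ 2 2).re
def Γ (ρ : Matrix (Fin 4) (Fin 4) ℂ) : ℝ := 2 * (ρ 1 2).re + 2 * (ρ 0 3).re
def Δ (ρ : Matrix (Fin 4) (Fin 4) ℂ) : ℝ := Λ₁ ρ * (ρ 1 2).re - Λ₂ ρ * (ρ 0 3).re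

lemma sqc : ((Real.sqrt 2 : ℂ))⁻¹ * ((Real.sqrt 2 : ℂ))⁻¹ = 1/2 := by
  rw [← mul_inv, ← Complex.ofReal_mul, Real.mul_self_sqrt (by norm_num)]
  norm_num

lemma psi_core (ρ : Matrix (Fin 4) (Fin 4) ℂ) (hρ : IsState ρ) (s : ℝ) (hs : s * s = 1)
    (h2 : Λ₂ ρ = 0) (hg : Γ ρ = s) :
    (∀ i, ρ i 1 = 0) ∧ (∀ i, ρ i 2 = 0) ∧ (∀ j, ρ 1 j = 0) ∧ (∀ j, ρ 2 j = 0) ∧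
    ρ 0 0 = 1/2 ∧ ρ 3 3 = 1/2 ∧ ρ 0 3 = (s : ℂ)/2 ∧ ρ 3 0 = (s : ℂ)/2 := by
  obtain ⟨psd, htr⟩ := hρ
  have hH := psd.1
  have herm : ∀ i j, ρ j i = (starRingEnd ℂ) (ρ i j) := fun i j => (hH.apply j i).symm
  -- diagonal entries nonneg
  have d0 := psd.dotProduct_mulVec_nonneg ![1,0,0,0]
  have d1 := psd.dotProduct_mulVec_nonneg ![0,1,0,0]
  have d2 := psd.dotProduct_mulVec_nonneg ![0,0,1,0]
  simp [dotProduct, Matrix.mulVec, Fin.sum_univ_four] at d0 d1 d2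
  rw [Complex.nonneg_iff] at d0 d1 d2
  have h2' : (ρ 1 1).re + (ρ 2 2).re = 0 := h2
  have h11 : ρ 1 1 = 0 := Complex.ext (by simp; linarith [d1.1, d2.1]) (by simpa using d1.2.symm)
  have h22 : ρ 2 2 = 0 := Complex.ext (by simp; linarith [d1.1, d2.1]) (by simpa using d2.2.symm)
  -- columns 1, 2 vanish
  have c1 : ∀ i, ρ i 1 = 0 := by
    have h := (psd.dotProduct_mulVec_zero_iff ![0,1,0,0]).mp (by
      simp [dotProduct, Matrix.mulVec, Fin.sum_univ_four, h11])
    intro i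
    simpa [Matrix.mulVec, dotProduct, Fin.sum_univ_four] using congrFun h i
  have c2 : ∀ i, ρ i 2 = 0 := by
    have h := (psd.dotProduct_mulVec_zero_iff ![0,0,1,0]).mp (by
      simp [dotProduct, Matrix.mulVec, Fin.sum_univ_four, h22])
    intro i
    simpa [Matrix.mulVec, dotProduct, Fin.sum_univ_four] using congrFun h i
  have r1 : ∀ j, ρ 1 j = 0 := fun j => by rw [herm j 1, c1 j, map_zero]
  have r2 : ∀ j, ρ 2 j = 0 := fun j => by rw [herm j 2, c2 j, map_zero]
  -- trace
  simp [Matrix.trace, Matrix.diag, Fin.sum_univ_four, h11, h22] at htr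
  -- Γ
  have hg' : 2 * (ρ 1 2).re + 2 * (ρ 0 3).re = s := hg
  rw [r1 2] at hg'
  simp only [Complex.zero_re, mul_zero, zero_add] at hg'
  have hre : (ρ 0 3).re = s / 2 := by linarith
  -- the kernel vector
  have hadd : ρ 0 3 + ρ 3 0 = (s : ℂ) := by
    rw [herm 0 3, Complex.add_conj, hre]
    push_cast; ring
  have hs' : (s : ℂ) * (s : ℂ) = 1 := by exact_mod_cast congrArg (Complex.ofReal) hs
  have hker := (psd.dotProduct_mulVec_zero_iff ![1,0,0,-(s:ℂ)]).mp (by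
    simp [dotProduct, Matrix.mulVec, Fin.sum_univ_four, Complex.conj_ofReal]
    linear_combination htr + (ρ 3 3 - 1) * hs' - (s : ℂ) * hadd)
  have k0 := congrFun hker 0
  have k3 := congrFun hker 3
  simp [Matrix.mulVec, dotProduct, Fin.sum_univ_four] at k0 k3
  -- k0 : ρ 0 0 = s * ρ 0 3 (roughly), k3 : ρ 3 0 = s * ρ 3 3
  have e03 : ρ 0 3 = (s : ℂ) * ρ 0 0 := by linear_combination -(s:ℂ) * k0 - ρ 0 3 * hs'
  have e30 : ρ 3 0 = (s : ℂ) * ρ 3 3 := by linear_combination k3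
  have h00conj : (starRingEnd ℂ) (ρ 0 0) = ρ 0 0 := Complex.conj_eq_iff_im.mpr d0.2.symm
  have e3300 : ρ 3 3 = ρ 0 0 := by
    have : ρ 3 0 = (starRingEnd ℂ) (ρ 0 3) := herm 0 3
    rw [e30, e03, _root_.map_mul, Complex.conj_ofReal, h00conj] at this
    have := mul_left_cancel₀ (a := (s:ℂ)) (by
      intro h; rw [h, zero_mul] at hs'; simp at hs') this
    exact this
  have e00 : ρ 0 0 = 1/2 := by linear_combination (htr - e3300) / 2
  refine ⟨c1, c2, r1, r2, e00, e3300.trans e00, ?_, ?_⟩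
  · rw [e03, e00]; ring
  · rw [e30, e3300, e00]; ring

lemma phi_core (ρ : Matrix (Fin 4) (Fin 4) ℂ) (hρ : IsState ρ) (s : ℝ) (hs : s * s = 1)
    (h1 : Λ₁ ρ = 0) (hg : Γ ρ = s) :
    (∀ i, ρ i 0 = 0) ∧ (∀ i, ρ i 3 = 0) ∧ (∀ j, ρ 0 j = 0) ∧ (∀ j, ρ 3 j = 0) ∧
    ρ 1 1 = 1/2 ∧ ρ 2 2 = 1/2 ∧ ρ 1 2 = (s : ℂ)/2 ∧ ρ 2 1 = (s : ℂ)/2 := by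
  obtain ⟨psd, htr⟩ := hρ
  have hH := psd.1
  have herm : ∀ i j, ρ j i = (starRingEnd ℂ) (ρ i j) := fun i j => (hH.apply j i).symm
  have d1 := psd.dotProduct_mulVec_nonneg ![0,1,0,0]
  have d0 := psd.dotProduct_mulVec_nonneg ![1,0,0,0]
  have d3 := psd.dotProduct_mulVec_nonneg ![0,0,0,1]
  simp [dotProduct, Matrix.mulVec, Fin.sum_univ_four] at d1 d0 d3
  rw [Complex.nonneg_iff] at d1 d0 d3
  have h1' : (ρ 0 0).re + (ρ 3 3).re = 0 := h1
  have h00 : ρ 0 0 = 0 := Complex.ext (by simp; linarith [d0.1, d3.1]) (by simpa using d0.2.symm)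
  have h33 : ρ 3 3 = 0 := Complex.ext (by simp; linarith [d0.1, d3.1]) (by simpa using d3.2.symm)
  have c0 : ∀ i, ρ i 0 = 0 := by
    have h := (psd.dotProduct_mulVec_zero_iff ![1,0,0,0]).mp (by
      simp [dotProduct, Matrix.mulVec, Fin.sum_univ_four, h00])
    intro i
    simpa [Matrix.mulVec, dotProduct, Fin.sum_univ_four] using congrFun h i
  have c3 : ∀ i, ρ i 3 = 0 := by
    have h := (psd.dotProduct_mulVec_zero_iff ![0,0,0,1]).mp (by
      simp [dotProduct, Matrix.mulVec, Fin.sum_univ_four, h33])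
    intro i
    simpa [Matrix.mulVec, dotProduct, Fin.sum_univ_four] using congrFun h i
  have r0 : ∀ j, ρ 0 j = 0 := fun j => by rw [herm j 0, c0 j, map_zero]
  have r3 : ∀ j, ρ 3 j = 0 := fun j => by rw [herm j 3, c3 j, map_zero]
  simp [Matrix.trace, Matrix.diag, Fin.sum_univ_four, h00, h33] at htr
  have hg' : 2 * (ρ 1 2).re + 2 * (ρ 0 3).re = s := hg
  rw [r0 3] at hg'
  simp only [Complex.zero_re, mul_zero, zero_add, add_zero] at hg'
  have hre : (ρ 1 2).re = s / 2 := by linarith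
  have hadd : ρ 1 2 + ρ 2 1 = (s : ℂ) := by
    rw [herm 1 2, Complex.add_conj, hre]
    push_cast; ring
  have hs' : (s : ℂ) * (s : ℂ) = 1 := by exact_mod_cast congrArg (Complex.ofReal) hs
  have hker := (psd.dotProduct_mulVec_zero_iff ![0,1,-(s:ℂ),0]).mp (by
    simp [dotProduct, Matrix.mulVec, Fin.sum_univ_four, Complex.conj_ofReal]
    linear_combination htr + (ρ 2 2 - 1) * hs' - (s : ℂ) * hadd)
  have k1 := congrFun hker 1
  have k2 := congrFun hker 2
  simp [Matrix.mulVec, dotProduct, Fin.sum_univ_four] at k1 k2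
  have e12 : ρ 1 2 = (s : ℂ) * ρ 1 1 := by linear_combination -(s:ℂ) * k1 - ρ 1 2 * hs'
  have e21 : ρ 2 1 = (s : ℂ) * ρ 2 2 := by linear_combination k2
  have h11conj : (starRingEnd ℂ) (ρ 1 1) = ρ 1 1 := Complex.conj_eq_iff_im.mpr d1.2.symm
  have e2211 : ρ 2 2 = ρ 1 1 := by
    have : ρ 2 1 = (starRingEnd ℂ) (ρ 1 2) := herm 1 2
    rw [e21, e12, _root_.map_mul, Complex.conj_ofReal, h11conj] at this
    have := mul_left_cancel₀ (a := (s:ℂ)) (by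
      intro h; rw [h, zero_mul] at hs'; simp at hs') this
    exact this
  have e11 : ρ 1 1 = 1/2 := by linear_combination (htr - e2211) / 2
  refine ⟨c0, c3, r0, r3, e11, e2211.trans e11, ?_, ?_⟩
  · rw [e12, e11]; ring
  · rw [e21, e2211, e11]; ring

/-- `S_Ψ ∩ R₊ = {Ψ₊Ψ₊*}`, `S_Ψ ∩ R₋ = {Ψ₋Ψ₋*}`,
`S_Φ ∩ R₊ = {Φ₊Φ₊*}` and `S_Φ ∩ R₋ = {Φ₋Φ₋*}`. -/
theorem bell_state_characterization (ρ : Matrix (Fin 4) (Fin 4) ℂ) (hρ : IsState ρ) :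
    (Λ₂ ρ = 0 ∧ Γ ρ = 1 ↔ ρ = outer PsiPlus) ∧
    (Λ₂ ρ = 0 ∧ Γ ρ = -1 ↔ ρ = outer PsiMinus) ∧
    (Λ₁ ρ = 0 ∧ Γ ρ = 1 ↔ ρ = outer PhiPlus) ∧
    (Λ₁ ρ = 0 ∧ Γ ρ = -1 ↔ ρ = outer PhiMinus) := by
  refine ⟨⟨fun h => ?_, fun h => ?_⟩, ⟨fun h => ?_, fun h => ?_⟩,
    ⟨fun h => ?_, fun h => ?_⟩, ⟨fun h => ?_, fun h => ?_⟩⟩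
  · obtain ⟨c1,c2,r1,r2,e00,e33,e03,e30⟩ := psi_core ρ hρ 1 (by norm_num) h.1 (by simpa using h.2)
    ext i j
    fin_cases i <;> fin_cases j <;>
      simp [outer, PsiPlus, Matrix.vecMulVec_apply, sqc, c1, c2, r1, r2, e00, e33, e03, e30]
  · subst h
    refine ⟨by simp [Λ₂, outer, PsiPlus, Matrix.vecMulVec_apply], ?_⟩
    norm_num [Γ, outer, PsiPlus, Matrix.vecMulVec_apply, sqc]
    simp
    field_simp
    norm_num
  · obtain ⟨c1,c2,r1,r2,e00,e33,e03,e30⟩ := psi_core ρ hρ (-1) (by norm_num) h.1 (by simpa using h.2)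
    ext i j
    fin_cases i <;> fin_cases j <;>
      simp [outer, PsiMinus, Matrix.vecMulVec_apply, sqc, c1, c2, r1, r2, e00, e33, e03, e30] <;> norm_num
  · subst h
    refine ⟨by simp [Λ₂, outer, PsiMinus, Matrix.vecMulVec_apply], ?_⟩
    norm_num [Γ, outer, PsiMinus, Matrix.vecMulVec_apply, sqc]
    simp
    field_simp
    norm_num
  · obtain ⟨c0,c3,r0,r3,e11,e22,e12,e21⟩ := phi_core ρ hρ 1 (by norm_num) h.1 (by simpa using h.2)
    ext i j
    fin_cases i <;> fin_cases j <;>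
      simp [outer, PhiPlus, Matrix.vecMulVec_apply, sqc, c0, c3, r0, r3, e11, e22, e12, e21]
  · subst h
    refine ⟨by simp [Λ₁, outer, PhiPlus, Matrix.vecMulVec_apply], ?_⟩
    norm_num [Γ, outer, PhiPlus, Matrix.vecMulVec_apply, sqc]
    simp
    field_simp
    norm_num
  · obtain ⟨c0,c3,r0,r3,e11,e22,e12,e21⟩ := phi_core ρ hρ (-1) (by norm_num) h.1 (by simpa using h.2)
    ext i j
    fin_cases i <;> fin_cases j <;>
      simp [outer, PhiMinus, Matrix.vecMulVec_apply, sqc, c0, c3, r0, r3, e11, e22, e12, e21] <;> norm_num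
  · subst h
    refine ⟨by simp [Λ₁, outer, PhiMinus, Matrix.vecMulVec_apply], ?_⟩
    norm_num [Γ, outer, PhiMinus, Matrix.vecMulVec_apply, sqc]
    simp
    field_simp
    norm_num
end
end

section
/- Let V(ρ) = √(Λ₁(ρ)Λ₂(ρ) + 1 − Γ(ρ)²) and let Ē = {Ψ₊Ψ₊*, Ψ₋Ψ₋*, Φ₊Φ₊*, Φ₋Φ₋*} be the set of Bell states. Then for every ρ in the state space S, the bounds C₁·d_B(ρ, Ē) ≤ V(ρ) ≤ C₂·d_B(ρ, Ē) hold with C₁ = 1/√6 and C₂ = 2√2, where d_B(ρ, Ē) = min over ρ̄ ∈ Ē of d_B(ρ, ρ̄). -/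
open Matrix ComplexOrder

noncomputable section

open scoped Classical in
/-- Positive semidefinite square root (junk value `0` off the PSD cone). -/
def msqrt (A : Matrix (Fin 4) (Fin 4) ℂ) : Matrix (Fin 4) (Fin 4) ℂ :=
  if h : A.PosSemidef then
    (h.1.eigenvectorUnitary : Matrix (Fin 4) (Fin 4) ℂ) *
      diagonal ((↑) ∘ (√·) ∘ h.1.eigenvalues) *
      (star h.1.eigenvectorUnitary : Matrix (Fin 4) (Fin 4) ℂ)
  else 0

/-- The Bures distance between two states. -/
def dB (ρa ρb : Matrix (Fin 4) (Fin 4) ℂ) : ℝ :=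
  Real.sqrt (2 - 2 * ((msqrt (msqrt ρb * ρa * msqrt ρb)).trace).re)

/-- The Bures distance from `ρ` to the set `Ē` of the four Bell states
(the minimum over the four Bell states). -/
def dBBell (ρ : Matrix (Fin 4) (Fin 4) ℂ) : ℝ :=
  min (min (dB ρ (outer PsiPlus)) (dB ρ (outer PsiMinus)))
      (min (dB ρ (outer PhiPlus)) (dB ρ (outer PhiMinus)))

/-! For a unit vector `ξ`, `√(ξξ*) = ξξ*` and `ξξ* ρ ξξ* = F ξξ*` with `F = ⟨ξ, ρ ξ⟩` the fidelity,
so the Bures distance from `ρ` to `ξξ*` is `√(2 - 2√F)`. The fidelities `p, q, r, s` of `ρ` with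
`Ψ₊, Ψ₋, Φ₊, Φ₋` are nonnegative with sum `Tr ρ = 1`, and `Λ₁ = p + q`, `Λ₂ = r + s`,
`Γ = (p - q) + (r - s)`. Hence `d_B(ρ, Ē)` is the distance attached to the largest fidelity `M`,
its square lies between `1 - M` and `2 (1 - M)`, and both bounds reduce to the polynomial
inequalities `1 - M ≤ 3 V²` and `V² ≤ 8 (1 - M)` on the simplex. -/

def pureFidelity {n : Type*} [Fintype n] (ρ : Matrix n n ℂ) (ξ : n → ℂ) : ℝ :=
  (star ξ ⬝ᵥ ρ *ᵥ ξ).re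

def buresOfFidelity (F : ℝ) : ℝ := √(2 - 2 * √F)

section Matrix

variable {n : Type*}

lemma Matrix.IsHermitian.re_apply_comm {ρ : Matrix n n ℂ} (hρ : ρ.IsHermitian) (i j : n) :
    (ρ j i).re = (ρ i j).re := by
  rw [← hρ.apply i j, Complex.star_def, Complex.conj_re]

variable [Fintype n]

lemma Matrix.PosSemidef.dotProduct_mulVec_eq_pureFidelity {ρ : Matrix n n ℂ}
    (hρ : ρ.PosSemidef) (ξ : n → ℂ) : star ξ ⬝ᵥ ρ *ᵥ ξ = pureFidelity ρ ξ :=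
  Complex.eq_re_of_ofReal_le (by exact_mod_cast hρ.dotProduct_mulVec_nonneg ξ)

lemma Matrix.PosSemidef.pureFidelity_nonneg {ρ : Matrix n n ℂ} (hρ : ρ.PosSemidef)
    (ξ : n → ℂ) : 0 ≤ pureFidelity ρ ξ :=
  (Complex.nonneg_iff.mp (hρ.dotProduct_mulVec_nonneg ξ)).1

lemma vecMulVec_star_mul_self {ξ : n → ℂ} (hξ : star ξ ⬝ᵥ ξ = 1) :
    vecMulVec ξ (star ξ) * vecMulVec ξ (star ξ) = vecMulVec ξ (star ξ) := by
  rw [vecMulVec_mul_vecMulVec, hξ, one_smul]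

lemma vecMulVec_star_mul_mul_vecMulVec_star (ρ : Matrix n n ℂ) (ξ : n → ℂ) :
    vecMulVec ξ (star ξ) * ρ * vecMulVec ξ (star ξ) =
      (star ξ ⬝ᵥ ρ *ᵥ ξ) • vecMulVec ξ (star ξ) := by
  rw [vecMulVec_mul, vecMulVec_mul_vecMulVec, vecMulVec_smul, dotProduct_mulVec]

end Matrix

open scoped MatrixOrder in
lemma msqrt_eq_of_mul_self {A B : Matrix (Fin 4) (Fin 4) ℂ} (hB : B.PosSemidef)
    (h : B * B = A) : msqrt A = B := by
  have hA : A.PosSemidef := by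
    simpa only [hB.1.eq, h] using posSemidef_conjTranspose_mul_self B
  have hcfc : cfc Real.sqrt A = B := by
    rw [← CFC.sqrt_unique h hB.nonneg, CFC.sqrt_eq_cfc, cfc_nnreal_eq_real _ A]
    exact congrArg (cfc · A) (funext Real.sqrt.eq_1)
  rw [msqrt, dif_pos hA, ← hcfc, hA.1.cfc_eq, IsHermitian.cfc, Unitary.conjStarAlgAut_apply]
  rfl

lemma dB_outer {ρ : Matrix (Fin 4) (Fin 4) ℂ} (hρ : ρ.PosSemidef) {ξ : Fin 4 → ℂ}
    (hξ : star ξ ⬝ᵥ ξ = 1) : dB ρ (outer ξ) = buresOfFidelity (pureFidelity ρ ξ) := by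
  have hF := hρ.pureFidelity_nonneg ξ
  have hsqrt_outer : msqrt (outer ξ) = outer ξ :=
    msqrt_eq_of_mul_self (posSemidef_vecMulVec_self_star ξ) (vecMulVec_star_mul_self hξ)
  have hsqrt_conj : msqrt (outer ξ * ρ * outer ξ) = (√(pureFidelity ρ ξ) : ℂ) • outer ξ := by
    refine msqrt_eq_of_mul_self ((posSemidef_vecMulVec_self_star ξ).smul (by positivity)) ?_
    rw [outer, vecMulVec_star_mul_mul_vecMulVec_star, smul_mul_smul_comm,
      vecMulVec_star_mul_self hξ, hρ.dotProduct_mulVec_eq_pureFidelity, ← Complex.ofReal_mul,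
      Real.mul_self_sqrt hF]
  rw [dB, hsqrt_outer, hsqrt_conj, trace_smul, outer, trace_vecMulVec, dotProduct_comm, hξ,
    smul_eq_mul, mul_one, Complex.ofReal_re, buresOfFidelity]

lemma star_dotProduct_self_bell :
    star PsiPlus ⬝ᵥ PsiPlus = 1 ∧ star PsiMinus ⬝ᵥ PsiMinus = 1 ∧
      star PhiPlus ⬝ᵥ PhiPlus = 1 ∧ star PhiMinus ⬝ᵥ PhiMinus = 1 := by
  have h : (√2 : ℂ)⁻¹ * (√2 : ℂ)⁻¹ = 2⁻¹ := by
    rw [← mul_inv, ← Complex.ofReal_mul, Real.mul_self_sqrt zero_le_two, Complex.ofReal_ofNat]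
  refine ⟨?_, ?_, ?_, ?_⟩ <;>
  · simp [PsiPlus, PsiMinus, PhiPlus, PhiMinus, dotProduct, Fin.sum_univ_four, h, ← two_mul]

lemma pureFidelity_bell {ρ : Matrix (Fin 4) (Fin 4) ℂ} (hρ : ρ.IsHermitian) :
    pureFidelity ρ PsiPlus = Λ₁ ρ / 2 + (ρ 0 3).re ∧
      pureFidelity ρ PsiMinus = Λ₁ ρ / 2 - (ρ 0 3).re ∧
      pureFidelity ρ PhiPlus = Λ₂ ρ / 2 + (ρ 1 2).re ∧
      pureFidelity ρ PhiMinus = Λ₂ ρ / 2 - (ρ 1 2).re := by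
  have h03 := hρ.re_apply_comm 0 3
  have h12 := hρ.re_apply_comm 1 2
  refine ⟨?_, ?_, ?_, ?_⟩ <;>
  · simp [pureFidelity, PsiPlus, PsiMinus, PhiPlus, PhiMinus, Λ₁, Λ₂, dotProduct, mulVec,
      Fin.sum_univ_four, h03, h12]
    grind [Real.mul_self_sqrt zero_le_two]

lemma Λ₁_add_Λ₂_eq_one {ρ : Matrix (Fin 4) (Fin 4) ℂ} (h : ρ.trace = 1) :
    Λ₁ ρ + Λ₂ ρ = 1 := by
  have hre := congrArg Complex.re h
  simp only [trace, diag_apply, Fin.sum_univ_four, Complex.add_re, Complex.one_re] at hre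
  rw [Λ₁, Λ₂]
  linarith

lemma buresOfFidelity_antitone : Antitone buresOfFidelity := fun _ _ h ↦
  Real.sqrt_le_sqrt (by linarith [Real.sqrt_le_sqrt h])

lemma one_sub_le_sq_buresOfFidelity {F : ℝ} (hF : 0 ≤ F) : 1 - F ≤ buresOfFidelity F ^ 2 := by
  rw [buresOfFidelity, Real.sq_sqrt']
  exact le_max_of_le_left (by nlinarith [Real.sq_sqrt hF, sq_nonneg (1 - √F)])

lemma sq_buresOfFidelity_le {F : ℝ} (hF₀ : 0 ≤ F) (hF₁ : F ≤ 1) :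
    buresOfFidelity F ^ 2 ≤ 2 * (1 - F) := by
  have hF_le : F ≤ √F := Real.le_sqrt_of_sq_le (by nlinarith)
  have hsqrt_le : √F ≤ 1 := Real.sqrt_le_one.mpr hF₁
  rw [buresOfFidelity, Real.sq_sqrt (by linarith)]
  linarith

lemma lyapunov_sq_le {p q r s : ℝ} (hp : 0 ≤ p) (hq : 0 ≤ q) (hr : 0 ≤ r) (hs : 0 ≤ s)
    (hsum : p + q + r + s = 1) :
    (p + q) * (r + s) + 1 - (p - q + (r - s)) ^ 2 ≤ 8 * (1 - p) := by
  nlinarith [mul_nonneg hq hr, mul_nonneg hq hs]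

lemma one_sub_le_lyapunov_sq {p q r s M : ℝ} (hp : 0 ≤ p) (hq : 0 ≤ q) (hr : 0 ≤ r) (hs : 0 ≤ s)
    (hsum : p + q + r + s = 1) (hpM : p ≤ M) (hqM : q ≤ M) (hrM : r ≤ M) (hsM : s ≤ M) :
    1 - M ≤ 3 * ((p + q) * (r + s) + 1 - (p - q + (r - s)) ^ 2) := by
  nlinarith [mul_nonneg hp hq, mul_nonneg hr hs]

theorem lyapunov_bounds_of_fidelities {p q r s : ℝ} (hp : 0 ≤ p) (hq : 0 ≤ q) (hr : 0 ≤ r)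
    (hs : 0 ≤ s) (hsum : p + q + r + s = 1) :
    1 / √6 * min (min (buresOfFidelity p) (buresOfFidelity q))
        (min (buresOfFidelity r) (buresOfFidelity s)) ≤
      √((p + q) * (r + s) + 1 - (p - q + (r - s)) ^ 2) ∧
    √((p + q) * (r + s) + 1 - (p - q + (r - s)) ^ 2) ≤
      2 * √2 * min (min (buresOfFidelity p) (buresOfFidelity q))
        (min (buresOfFidelity r) (buresOfFidelity s)) := by
  set W := (p + q) * (r + s) + 1 - (p - q + (r - s)) ^ 2
  set M := max (max p q) (max r s)
  have hmin : min (min (buresOfFidelity p) (buresOfFidelity q))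
      (min (buresOfFidelity r) (buresOfFidelity s)) = buresOfFidelity M := by
    simp only [M, buresOfFidelity_antitone.map_max]
  have hM₀ : 0 ≤ M := le_max_of_le_left (le_max_of_le_left hp)
  have hM₁ : M ≤ 1 :=
    max_le (max_le (by linarith) (by linarith)) (max_le (by linarith) (by linarith))
  have hW : W ≤ 8 * (1 - M) := by
    have hWp := lyapunov_sq_le hp hq hr hs hsum
    have hWq := lyapunov_sq_le hq hp hs hr (by linarith)
    have hWr := lyapunov_sq_le hr hs hp hq (by linarith)
    have hWs := lyapunov_sq_le hs hr hq hp (by linarith)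
    have hM_le : M ≤ 1 - W / 8 :=
      max_le (max_le (by linarith) (by linarith)) (max_le (by linarith) (by linarith))
    linarith
  have hM : 1 - M ≤ 3 * W := one_sub_le_lyapunov_sq hp hq hr hs hsum
    (le_max_of_le_left (le_max_left p q)) (le_max_of_le_left (le_max_right p q))
    (le_max_of_le_right (le_max_left r s)) (le_max_of_le_right (le_max_right r s))
  have hd_sq_le := sq_buresOfFidelity_le hM₀ hM₁
  have hd_sq_ge := one_sub_le_sq_buresOfFidelity hM₀
  have hd₀ : 0 ≤ buresOfFidelity M := Real.sqrt_nonneg _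
  rw [hmin]
  constructor
  · rw [Real.le_sqrt (by positivity) (by nlinarith), mul_pow, div_pow, one_pow,
      Real.sq_sqrt (by norm_num)]
    linarith
  · rw [Real.sqrt_le_iff, mul_pow, mul_pow, Real.sq_sqrt zero_le_two]
    exact ⟨by positivity, by linarith⟩

/-- `C₁ d_B(ρ, Ē) ≤ V(ρ) ≤ C₂ d_B(ρ, Ē)` with `C₁ = 1/√6`, `C₂ = 2√2`,
where `V(ρ) = √(Λ₁(ρ)Λ₂(ρ) + 1 - Γ(ρ)²)`. -/
theorem lyapunov_bures_bounds (ρ : Matrix (Fin 4) (Fin 4) ℂ) (hρ : IsState ρ) :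
    (1 / Real.sqrt 6) * dBBell ρ ≤ Real.sqrt (Λ₁ ρ * Λ₂ ρ + 1 - Γ ρ ^ 2) ∧
    Real.sqrt (Λ₁ ρ * Λ₂ ρ + 1 - Γ ρ ^ 2) ≤ 2 * Real.sqrt 2 * dBBell ρ := by
  obtain ⟨hpsd, htr⟩ := hρ
  obtain ⟨hΨp, hΨm, hΦp, hΦm⟩ := pureFidelity_bell hpsd.1
  obtain ⟨uΨp, uΨm, uΦp, uΦm⟩ := star_dotProduct_self_bell
  have hΛ₁ : Λ₁ ρ = pureFidelity ρ PsiPlus + pureFidelity ρ PsiMinus := by linarith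
  have hΛ₂ : Λ₂ ρ = pureFidelity ρ PhiPlus + pureFidelity ρ PhiMinus := by linarith
  have hΓ : Γ ρ = pureFidelity ρ PsiPlus - pureFidelity ρ PsiMinus +
      (pureFidelity ρ PhiPlus - pureFidelity ρ PhiMinus) := by rw [Γ]; linarith
  have hsum := Λ₁_add_Λ₂_eq_one htr
  rw [dBBell, dB_outer hpsd uΨp, dB_outer hpsd uΨm, dB_outer hpsd uΦp, dB_outer hpsd uΦm,
    hΛ₁, hΛ₂, hΓ]
  exact lyapunov_bounds_of_fidelities (hpsd.pureFidelity_nonneg _) (hpsd.pureFidelity_nonneg _)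
    (hpsd.pureFidelity_nonneg _) (hpsd.pureFidelity_nonneg _) (by linarith)
end
end

section
/- Let H ∈ ℂ^{n×n} be Hermitian, let ρ ∈ ℂ^{n×n} be positive semidefinite with Tr(ρ) = 1, and let ξ ∈ ℂⁿ be a unit vector. Then |Tr(i[H, ρ] ξξ*)| ≤ 2‖H‖ √(1 − ξ*ρξ), where [H, ρ] = Hρ − ρH and ‖H‖ denotes the operator norm of H. -/
open Matrix ComplexOrder

noncomputable section

/-!
Write `T`, `R` for `H`, `ρ` acting on Euclidean space and `x` for `ξ`. Self-adjointness gives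
`⟪x, [T, R] x⟫ = w - conj w` with `w = ⟪T x, R x - x⟫`, so the left side is at most
`2 ‖T‖ ‖R x - x‖`. Since `ρ` has trace one its eigenvalues lie in `[0, 1]`, hence `R² ≤ R`, and
then `‖R x - x‖² = ‖R x‖² - 2 re ⟪x, R x⟫ + 1 ≤ 1 - re ⟪x, R x⟫`.
-/

open RCLike ComplexConjugate
open scoped InnerProductSpace

section InnerProductSpace

variable {𝕜 E : Type*} [RCLike 𝕜] [NormedAddCommGroup E] [InnerProductSpace 𝕜 E]

lemma norm_sub_sq_le_of_norm_sq_le_re_inner {x y : E} (h : ‖y‖ ^ 2 ≤ re ⟪x, y⟫_𝕜) :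
    ‖y - x‖ ^ 2 ≤ ‖x‖ ^ 2 - re ⟪x, y⟫_𝕜 := by
  rw [@norm_sub_sq 𝕜, inner_re_symm]
  linarith

namespace ContinuousLinearMap

variable [CompleteSpace E] {T R : E →L[𝕜] E}

lemma norm_apply_sq_le_re_inner (hR : IsSelfAdjoint R) (h : (R - R * R).IsPositive) (x : E) :
    ‖R x‖ ^ 2 ≤ re ⟪x, R x⟫_𝕜 := by
  have hRR : ⟪R x, R x⟫_𝕜 = ⟪x, R (R x)⟫_𝕜 := hR.isSymmetric x (R x)
  have := h.re_inner_nonneg_right x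
  rw [_root_.sub_apply, mul_apply_eq_comp, inner_sub_right, map_sub, ← hRR,
    ← @norm_sq_eq_re_inner 𝕜] at this
  linarith

lemma inner_commutator_eq (hT : IsSelfAdjoint T) (hR : IsSelfAdjoint R) (x : E) :
    ⟪x, (T * R - R * T) x⟫_𝕜 = ⟪T x, R x - x⟫_𝕜 - conj ⟪T x, R x - x⟫_𝕜 := by
  have hT' (y z : E) : ⟪T y, z⟫_𝕜 = ⟪y, T z⟫_𝕜 := hT.isSymmetric y z
  have hR' (y z : E) : ⟪R y, z⟫_𝕜 = ⟪y, R z⟫_𝕜 := hR.isSymmetric y z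
  rw [_root_.sub_apply, mul_apply_eq_comp, mul_apply_eq_comp, inner_sub_right, inner_sub_right,
    map_sub, inner_conj_symm, inner_conj_symm, ← hT' x (R x), ← hR' x (T x), hT' x x]
  ring

lemma norm_inner_commutator_le (hT : IsSelfAdjoint T) (hR : IsSelfAdjoint R) (x : E) :
    ‖⟪x, (T * R - R * T) x⟫_𝕜‖ ≤ 2 * ‖T‖ * ‖x‖ * ‖R x - x‖ := by
  set w := ⟪T x, R x - x⟫_𝕜
  calc ‖⟪x, (T * R - R * T) x⟫_𝕜‖ = ‖w - conj w‖ := by rw [inner_commutator_eq hT hR]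
    _ ≤ 2 * ‖w‖ := by
      rw [two_mul]
      nth_rewrite 2 [← RCLike.norm_conj w]
      exact norm_sub_le _ _
    _ ≤ 2 * (‖T x‖ * ‖R x - x‖) := by gcongr; exact norm_inner_le_norm _ _
    _ ≤ 2 * (‖T‖ * ‖x‖ * ‖R x - x‖) := by gcongr; exact T.le_opNorm x
    _ = 2 * ‖T‖ * ‖x‖ * ‖R x - x‖ := by ring

lemma norm_inner_commutator_le_sqrt (hT : IsSelfAdjoint T) (hR : IsSelfAdjoint R)
    (hRR : (R - R * R).IsPositive) {x : E} (hx : ‖x‖ = 1) :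
    ‖⟪x, (T * R - R * T) x⟫_𝕜‖ ≤ 2 * ‖T‖ * √(1 - re ⟪x, R x⟫_𝕜) := by
  have hRx : ‖R x - x‖ ^ 2 ≤ 1 - re ⟪x, R x⟫_𝕜 := by
    simpa [hx] using norm_sub_sq_le_of_norm_sq_le_re_inner (norm_apply_sq_le_re_inner hR hRR x)
  calc ‖⟪x, (T * R - R * T) x⟫_𝕜‖ ≤ 2 * ‖T‖ * ‖x‖ * ‖R x - x‖ := norm_inner_commutator_le hT hR x
    _ ≤ 2 * ‖T‖ * √(1 - re ⟪x, R x⟫_𝕜) := by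
      rw [hx, mul_one]
      gcongr
      exact Real.le_sqrt_of_sq_le hRx

end ContinuousLinearMap

end InnerProductSpace

namespace Matrix

variable {n 𝕜 : Type*} [Fintype n] [RCLike 𝕜]

lemma trace_mul_vecMulVec_star (A : Matrix n n 𝕜) (x : n → 𝕜) :
    (A * vecMulVec x (star x)).trace = star x ⬝ᵥ A *ᵥ x := by
  rw [trace_mul_comm, vecMulVec_mul, trace_vecMulVec, dotProduct_comm, dotProduct_mulVec]

variable [DecidableEq n] {A : Matrix n n 𝕜}

lemma inner_toLp_toEuclideanCLM_toLp (A : Matrix n n 𝕜) (x y : n → 𝕜) :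
    ⟪WithLp.toLp 2 x, toEuclideanCLM (𝕜 := 𝕜) A (WithLp.toLp 2 y)⟫_𝕜 = star x ⬝ᵥ A *ᵥ y := by
  rw [toEuclideanCLM_toLp, EuclideanSpace.inner_toLp_toLp, dotProduct_comm]

lemma isPositive_toEuclideanCLM_iff : (toEuclideanCLM (𝕜 := 𝕜) A).IsPositive ↔ A.PosSemidef := by
  rw [← ContinuousLinearMap.isPositive_toLinearMap_iff, coe_toEuclideanCLM_eq_toEuclideanLin,
    isPositive_toEuclideanLin_iff]

namespace PosSemidef

lemma eigenvalues_le_re_trace (hA : A.PosSemidef) (i : n) : hA.1.eigenvalues i ≤ re A.trace := by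
  rw [hA.1.trace_eq_sum_eigenvalues, map_sum]
  simp only [ofReal_re]
  exact Finset.single_le_sum (fun j _ ↦ hA.eigenvalues_nonneg j) (Finset.mem_univ i)

open scoped MatrixOrder in
lemma sub_mul_self_of_eigenvalues_le_one (hA : A.PosSemidef) (h : ∀ i, hA.1.eigenvalues i ≤ 1) :
    (A - A * A).PosSemidef := by
  have hcfc : A - A * A = cfc (fun x : ℝ ↦ x - x * x) A := by
    rw [cfc_sub (fun x : ℝ ↦ x) (fun x ↦ x * x) A, cfc_mul (fun x : ℝ ↦ x) (fun x ↦ x) A,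
      cfc_id' ℝ A]
  rw [← nonneg_iff_posSemidef, hcfc]
  refine cfc_nonneg fun x hx ↦ ?_
  obtain ⟨i, rfl⟩ := hA.1.spectrum_real_eq_range_eigenvalues ▸ hx
  nlinarith [hA.eigenvalues_nonneg i, h i]

end PosSemidef

end Matrix

/-- for Hermitian `H`, a positive semidefinite `ρ` with `Tr(ρ) = 1`
and a unit vector `ξ`, one has `|Tr(i[H,ρ] ξξ*)| ≤ 2‖H‖ √(1 - ξ*ρξ)`, where `‖H‖`
is the operator norm of `H`. -/
theorem commutator_trace_bound {n : Type*} [Fintype n] [DecidableEq n]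
    (H ρ : Matrix n n ℂ) (hH : H.IsHermitian) (hρ : ρ.PosSemidef) (hTr : ρ.trace = 1)
    (ξ : n → ℂ) (hξ : star ξ ⬝ᵥ ξ = 1) :
    ‖(Complex.I • (H * ρ - ρ * H) * Matrix.vecMulVec ξ (star ξ)).trace‖ ≤
      2 * ‖Matrix.toEuclideanCLM (𝕜 := ℂ) H‖ *
        Real.sqrt (1 - (star ξ ⬝ᵥ ρ.mulVec ξ).re) := by
  set T := toEuclideanCLM (𝕜 := ℂ) H
  set R := toEuclideanCLM (𝕜 := ℂ) ρ
  set x := WithLp.toLp 2 ξ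
  have hRR : (R - R * R).IsPositive := by
    rw [← map_mul, ← map_sub, isPositive_toEuclideanCLM_iff]
    refine hρ.sub_mul_self_of_eigenvalues_le_one fun i ↦ ?_
    simpa [hTr] using hρ.eigenvalues_le_re_trace i
  have hx : ‖x‖ = 1 := by
    rw [@norm_eq_sqrt_re_inner ℂ, EuclideanSpace.inner_toLp_toLp, dotProduct_comm, hξ, one_re,
      Real.sqrt_one]
  have hcomm : toEuclideanCLM (𝕜 := ℂ) (H * ρ - ρ * H) = T * R - R * T := by
    rw [map_sub, map_mul, map_mul]
  rw [smul_mul, trace_smul, smul_eq_mul, norm_mul, Complex.norm_I, one_mul,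
    trace_mul_vecMulVec_star, ← inner_toLp_toEuclideanCLM_toLp, hcomm,
    ← inner_toLp_toEuclideanCLM_toLp]
  exact ContinuousLinearMap.norm_inner_commutator_le_sqrt (hH.isSelfAdjoint.map _)
    (hρ.1.isSelfAdjoint.map _) hRR hx
end
end

section
/- Let ω ≥ 0, M₁ > 0, M₂ > 0, H₀ = ω L_z, L₁ = √M₁ L_z, L₂ = √M₂ L_x, and let ρ̄ be any Bell state. Then for every ρ in the state space S, Tr(ρ̄ F₀(ρ)) = 0, Tr(ρ̄ F₁(ρ)) = 0, and Tr(ρ̄ F₂(ρ)) = 0; that is, in the uncontrolled dynamics the drift of t ↦ Tr(ρ_t ρ̄) vanishes identically (Tr(ρ_t ρ̄) is a martingale). -/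
open Matrix ComplexOrder

noncomputable section

/-- Hamiltonian part of the drift: `F₀(ρ) = -i[H₀, ρ]` (for `u ≡ 0`). -/
def Fham (H ρ : Matrix (Fin 4) (Fin 4) ℂ) : Matrix (Fin 4) (Fin 4) ℂ :=
  -(Complex.I • (H * ρ - ρ * H))

/-- Dissipative drift: `F_k(ρ) = L_k ρ L_k - (1/2)(L_k² ρ + ρ L_k²)`. -/
def Fdiss (L ρ : Matrix (Fin 4) (Fin 4) ℂ) : Matrix (Fin 4) (Fin 4) ℂ :=
  L * ρ * L - (1 / 2 : ℂ) • (L * L * ρ + ρ * (L * L))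

/-- Diffusion map: `G_k(ρ) = L_k ρ + ρ L_k - 2 Tr(L_k ρ) ρ`. -/
def Gdiff (L ρ : Matrix (Fin 4) (Fin 4) ℂ) : Matrix (Fin 4) (Fin 4) ℂ :=
  L * ρ + ρ * L - (2 * (L * ρ).trace) • ρ

/-!
Each Bell vector is a common eigenvector of the Hermitian matrices `L_z` and `L_x` with real
eigenvalue, so each Bell state `ρ̄` commutes with `L_z` and `L_x`. For any `P` commuting with `L`,
cyclicity of the trace gives `Tr(P ρ L) = Tr(L P ρ) = Tr(P L ρ)`; hence `Tr(P [L, ρ]) = 0` and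
`Tr(P L ρ L) = Tr(P L² ρ) = Tr(P ρ L²)`, which makes `Tr(P F(ρ))` vanish for both kinds of drift.
-/

namespace Matrix

variable {n R : Type*} [Fintype n]

theorem trace_mul_mul_comm_of_commute [NonUnitalCommSemiring R] {P A : Matrix n n R} (h : Commute P A)
    (ρ : Matrix n n R) : (P * (ρ * A)).trace = (P * (A * ρ)).trace := by
  rw [trace_mul_cycle', ← Matrix.mul_assoc, ← h.eq, Matrix.mul_assoc]

theorem trace_mul_commutator_eq_zero_of_commute [NonUnitalCommRing R] {P A : Matrix n n R}
    (h : Commute P A) (ρ : Matrix n n R) : (P * (A * ρ - ρ * A)).trace = 0 := by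
  rw [Matrix.mul_sub, trace_sub, trace_mul_mul_comm_of_commute h, sub_self]

theorem IsHermitian.commute_vecMulVec_star [CommSemiring R] [StarRing R] {A : Matrix n n R}
    (hA : A.IsHermitian) {c : R} (hc : IsSelfAdjoint c) {u : n → R} (hu : A *ᵥ u = c • u) :
    Commute A (vecMulVec u (star u)) := by
  have hu' : star u ᵥ* A = c • star u := by
    rw [← hA.eq, ← star_mulVec, hu, star_smul, hc.star_eq]
  rw [Commute, SemiconjBy, mul_vecMulVec, vecMulVec_mul, hu, hu', smul_vecMulVec, vecMulVec_smul]

end Matrix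

theorem trace_mul_Fham_eq_zero_of_commute {P H : Matrix (Fin 4) (Fin 4) ℂ} (h : Commute P H)
    (ρ : Matrix (Fin 4) (Fin 4) ℂ) : (P * Fham H ρ).trace = 0 := by
  rw [Fham, Matrix.mul_neg, Matrix.mul_smul, trace_neg, trace_smul,
    trace_mul_commutator_eq_zero_of_commute h, smul_zero, neg_zero]

theorem trace_mul_Fdiss_eq_zero_of_commute {P L : Matrix (Fin 4) (Fin 4) ℂ} (h : Commute P L)
    (ρ : Matrix (Fin 4) (Fin 4) ℂ) : (P * Fdiss L ρ).trace = 0 := by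
  have hL : (P * (L * ρ * L)).trace = (P * (L * L * ρ)).trace := by
    rw [trace_mul_mul_comm_of_commute h, Matrix.mul_assoc]
  have hLL : (P * (ρ * (L * L))).trace = (P * (L * L * ρ)).trace :=
    trace_mul_mul_comm_of_commute (h.mul_right h) ρ
  rw [Fdiss, Matrix.mul_sub, trace_sub, Matrix.mul_smul, trace_smul, Matrix.mul_add, trace_add,
    hL, hLL, smul_eq_mul]
  ring

theorem Lz_mulVec (v : Fin 4 → ℂ) : Lz *ᵥ v = ![v 0, -v 1, -v 2, v 3] := by
  ext i; fin_cases i <;> simp [Lz, kron, σz, mulVec, dotProduct, Fin.sum_univ_four]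

theorem Lx_mulVec (v : Fin 4 → ℂ) : Lx *ᵥ v = ![v 3, v 2, v 1, v 0] := by
  ext i; fin_cases i <;> simp [Lx, kron, σx, mulVec, dotProduct, Fin.sum_univ_four]

theorem Lz_isHermitian : Lz.IsHermitian := by
  ext i j; fin_cases i <;> fin_cases j <;> simp [Lz, kron, σz]

theorem Lx_isHermitian : Lx.IsHermitian := by
  ext i j; fin_cases i <;> fin_cases j <;> simp [Lx, kron, σx]

theorem commute_Lz_and_Lx_of_mem_BellStates {P : Matrix (Fin 4) (Fin 4) ℂ} (hP : P ∈ BellStates) :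
    Commute P Lz ∧ Commute P Lx := by
  have of_eigen (ξ : Fin 4 → ℂ) (cz cx : ℝ) (hz : Lz *ᵥ ξ = (cz : ℂ) • ξ)
      (hx : Lx *ᵥ ξ = (cx : ℂ) • ξ) : Commute (outer ξ) Lz ∧ Commute (outer ξ) Lx :=
    ⟨(Lz_isHermitian.commute_vecMulVec_star (Complex.conj_ofReal cz) hz).symm,
      (Lx_isHermitian.commute_vecMulVec_star (Complex.conj_ofReal cx) hx).symm⟩
  rcases hP with rfl | rfl | rfl | rfl <;>
    [apply of_eigen _ 1 1; apply of_eigen _ 1 (-1); apply of_eigen _ (-1) 1;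
      apply of_eigen _ (-1) (-1)] <;>
    ext i <;> fin_cases i <;> simp [Lz_mulVec, Lx_mulVec, PsiPlus, PsiMinus, PhiPlus, PhiMinus]

theorem drift_of_fidelity_vanishes_general (ω M₁ M₂ : ℝ) (ρbar : Matrix (Fin 4) (Fin 4) ℂ)
    (hbell : ρbar ∈ BellStates) (ρ : Matrix (Fin 4) (Fin 4) ℂ) :
    (ρbar * Fham ((ω : ℂ) • Lz) ρ).trace = 0 ∧
    (ρbar * Fdiss ((Real.sqrt M₁ : ℂ) • Lz) ρ).trace = 0 ∧
    (ρbar * Fdiss ((Real.sqrt M₂ : ℂ) • Lx) ρ).trace = 0 := by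
  obtain ⟨hz, hx⟩ := commute_Lz_and_Lx_of_mem_BellStates hbell
  exact ⟨trace_mul_Fham_eq_zero_of_commute (hz.smul_right _) ρ,
    trace_mul_Fdiss_eq_zero_of_commute (hz.smul_right _) ρ,
    trace_mul_Fdiss_eq_zero_of_commute (hx.smul_right _) ρ⟩

/-- with `H₀ = ω L_z`, `L₁ = √M₁ L_z`, `L₂ = √M₂ L_x` and `ρ̄` any Bell
state, `Tr(ρ̄ F₀(ρ)) = Tr(ρ̄ F₁(ρ)) = Tr(ρ̄ F₂(ρ)) = 0` for every state `ρ`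
(the drift of `Tr(ρ_t ρ̄)` vanishes identically). -/
theorem drift_of_fidelity_vanishes (ω M₁ M₂ : ℝ) (hω : 0 ≤ ω) (hM₁ : 0 < M₁)
    (hM₂ : 0 < M₂) (ρbar : Matrix (Fin 4) (Fin 4) ℂ) (hbell : ρbar ∈ BellStates)
    (ρ : Matrix (Fin 4) (Fin 4) ℂ) (hρ : IsState ρ) :
    (ρbar * Fham ((ω : ℂ) • Lz) ρ).trace = 0 ∧
    (ρbar * Fdiss ((Real.sqrt M₁ : ℂ) • Lz) ρ).trace = 0 ∧
    (ρbar * Fdiss ((Real.sqrt M₂ : ℂ) • Lx) ρ).trace = 0 :=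
  drift_of_fidelity_vanishes_general ω M₁ M₂ ρbar hbell ρ
end
end

section
/- Let ω ≥ 0, M₁ > 0, M₂ > 0, H₀ = ω L_z, L₁ = √M₁ L_z, L₂ = √M₂ L_x, and let P = e₂e₂* + e₃e₃* be the orthogonal projection onto span(e₂, e₃), so that Λ₂(ρ) = Tr(Pρ). Then for every ρ in the state space S: Tr(P F₀(ρ)) = 0, Tr(P F₁(ρ)) = 0, Tr(P F₂(ρ)) = 0, Tr(P G₁(ρ)) = −4√M₁ · Λ₁(ρ)Λ₂(ρ), and Tr(P G₂(ρ)) = 4√M₂ · Δ(ρ). (These are the drift and diffusion coefficients of Λ₂(ρ_t) in the uncontrolled dynamics, up to the efficiency factors √η_k.) -/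
open Matrix ComplexOrder

set_option maxHeartbeats 1000000

noncomputable section

/-- The orthogonal projection `P = e₂e₂* + e₃e₃*` onto `span(e₂, e₃)`. -/
def Pproj : Matrix (Fin 4) (Fin 4) ℂ :=
  outer (Pi.single 1 1) + outer (Pi.single 2 1)


lemma Lz_eq : Lz = !![1,0,0,0;0,-1,0,0;0,0,-1,0;0,0,0,1] := by
  ext i j; fin_cases i <;> fin_cases j <;>
    simp [Lz, kron, σz, Matrix.vecHead, Matrix.vecTail]

lemma Lx_eq : Lx = !![0,0,0,1;0,0,1,0;0,1,0,0;1,0,0,0] := by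
  ext i j; fin_cases i <;> fin_cases j <;>
    simp [Lx, kron, σx, Matrix.vecHead, Matrix.vecTail]

lemma Pproj_eq : Pproj = !![0,0,0,0;0,1,0,0;0,0,1,0;0,0,0,0] := by
  ext i j; fin_cases i <;> fin_cases j <;>
    simp [Pproj, outer, Matrix.vecMulVec, Pi.single, Function.update,
      Matrix.vecHead, Matrix.vecTail]

/-- drift and diffusion coefficients of `Λ₂(ρ_t) = Tr(Pρ_t)` in the
uncontrolled dynamics: `Tr(P F₀(ρ)) = Tr(P F₁(ρ)) = Tr(P F₂(ρ)) = 0`,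
`Tr(P G₁(ρ)) = -4√M₁ Λ₁(ρ)Λ₂(ρ)` and `Tr(P G₂(ρ)) = 4√M₂ Δ(ρ)`. -/
theorem lambda2_dynamics (ω M₁ M₂ : ℝ) (hω : 0 ≤ ω) (hM₁ : 0 < M₁) (hM₂ : 0 < M₂)
    (ρ : Matrix (Fin 4) (Fin 4) ℂ) (hρ : IsState ρ) :
    (Pproj * ρ).trace = (Λ₂ ρ : ℂ) ∧
    (Pproj * Fham ((ω : ℂ) • Lz) ρ).trace = 0 ∧
    (Pproj * Fdiss ((Real.sqrt M₁ : ℂ) • Lz) ρ).trace = 0 ∧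
    (Pproj * Fdiss ((Real.sqrt M₂ : ℂ) • Lx) ρ).trace = 0 ∧
    (Pproj * Gdiff ((Real.sqrt M₁ : ℂ) • Lz) ρ).trace =
      ((-4 * Real.sqrt M₁ * (Λ₁ ρ * Λ₂ ρ) : ℝ) : ℂ) ∧
    (Pproj * Gdiff ((Real.sqrt M₂ : ℂ) • Lx) ρ).trace =
      ((4 * Real.sqrt M₂ * Δ ρ : ℝ) : ℂ) := by
  
  obtain ⟨hpsd, htr⟩ := hρ
  have hH := hpsd.isHermitian
  have hd : ∀ i, ρ i i = ((ρ i i).re : ℂ) := by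
    intro i
    have h2 := hH.apply i i
    rw [Complex.star_def] at h2
    exact (Complex.conj_eq_iff_re.mp h2).symm
  have h21 : ρ 2 1 = 2 * ((ρ 1 2).re : ℂ) - ρ 1 2 := by
    have h2 := hH.apply 2 1
    rw [Complex.star_def] at h2
    have h := Complex.add_conj (ρ 1 2); push_cast at h
    rw [← h2]; linear_combination h
  have h30 : ρ 3 0 = 2 * ((ρ 0 3).re : ℂ) - ρ 0 3 := by
    have h2 := hH.apply 3 0
    rw [Complex.star_def] at h2
    have h := Complex.add_conj (ρ 0 3); push_cast at h
    rw [← h2]; linear_combination h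
  have htrC : ((ρ 0 0).re : ℂ) + (ρ 1 1).re + (ρ 2 2).re + (ρ 3 3).re = 1 := by
    rw [← hd 0, ← hd 1, ← hd 2, ← hd 3]
    simpa [Matrix.trace, Matrix.diag, Fin.sum_univ_four] using htr
  refine ⟨?_, ?_, ?_, ?_, ?_, ?_⟩ <;>
    simp only [Fham, Fdiss, Gdiff, Lz_eq, Lx_eq, Pproj_eq, Λ₁, Λ₂, Δ] <;>
    simp [Matrix.trace, Matrix.diag, Fin.sum_univ_four, Matrix.mul_apply,
      Matrix.vecHead, Matrix.vecTail, Matrix.smul_apply, Matrix.sub_apply,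
      Matrix.add_apply, Matrix.neg_apply, Matrix.vecMul, dotProduct] <;>
    push_cast <;>
    (try rw [hd 0]) <;> (try rw [hd 1]) <;> (try rw [hd 2]) <;> (try rw [hd 3]) <;>
    (try simp only [Complex.ofReal_re]) <;> (try ring)
  · linear_combination
      (2 * (Real.sqrt M₁ : ℂ) * (((ρ 1 1).re : ℂ) + ((ρ 2 2).re : ℂ))) * htrC
  · rw [h21, h30]
    linear_combination (-4 * (Real.sqrt M₂ : ℂ) * ((ρ 1 2).re : ℂ)) * htrC
end
end

section
/- Let ρ̄ be a Bell state, H₁ = σ_z ⊗ σ_y − 3(𝟙 ⊗ σ_y), and define the feedback law u(ρ) = α(1 − X(ρ))^β − γ·T(ρ), where X(ρ) = Tr(ρρ̄), T(ρ) = Tr(i[H₁, ρ]ρ̄), α > 0, γ > 0, and β > 1. Set Θ_u(ρ) = u(ρ)·T(ρ). Then: (i) there exists a constant C > 0 such that |Θ_u(ρ)| ≤ C(1 − X(ρ)) for all ρ ∈ S; (ii) Θ_u(ρ) ≤ 2α‖H₁‖(1 − X(ρ))^{β + 1/2} for all ρ ∈ S, where ‖H₁‖ is the operator norm of H₁; and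 (iii) u(ρ) ≠ 0 whenever X(ρ) = 0. In particular, Θ_u(ρ)/(1 − X(ρ)) has nonpositive limit superior as ρ → ρ̄. -/
open Matrix ComplexOrder

noncomputable section

/-- The control Hamiltonian `H₁ = σ_z ⊗ σ_y - 3(𝟙 ⊗ σ_y)`. -/
def H₁ : Matrix (Fin 4) (Fin 4) ℂ := kron σz σy - (3 : ℂ) • kron id2 σy

/-! For `ρ̄ = ξξ*` we have `X(ρ) = ⟪ξ, ρξ⟫` and `T(ρ) = -2 Im ⟪H₁ξ, ρξ⟫`. The eigenvalues of a
state lie in `[0, 1]`, so `ρ² ≤ ρ` and `‖ρξ‖² ≤ X`. Every Bell vector satisfies `⟪H₁ξ, ξ⟫ = 0`, so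
`ρξ` may be replaced by its component orthogonal to `ξ`, of squared norm `‖ρξ‖² - X² ≤ X(1 - X)`,
and Cauchy–Schwarz gives `|T| ≤ 2‖H₁‖√(X(1 - X)) ≤ 2‖H₁‖√(1 - X)`. The three claims are then
inequalities between reals in `s = 1 - X`: `Θ = α s^β T - γ T² ≤ α s^β |T|`, `T² ≤ 4‖H₁‖² s`,
and `T = 0` when `X = 0`. -/

open WithLp

section InnerProductSpace

variable {𝕜 E : Type*} [RCLike 𝕜] [NormedAddCommGroup E] [InnerProductSpace 𝕜 E]

lemma norm_inner_le_of_inner_eq_zero {u v : E} (w : E) (hv : ‖v‖ = 1) (huv : inner 𝕜 u v = 0) :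
    ‖inner 𝕜 u w‖ ≤ ‖u‖ * √(‖w‖ ^ 2 - ‖inner 𝕜 v w‖ ^ 2) := by
  set c := inner 𝕜 v w
  have hu : inner 𝕜 u w = inner 𝕜 u (w - c • v) := by
    rw [inner_sub_right, inner_smul_right, huv, mul_zero, sub_zero]
  have hnorm : ‖w - c • v‖ ^ 2 = ‖w‖ ^ 2 - ‖c‖ ^ 2 := by
    have hwc : inner 𝕜 w (c • v) = (‖c‖ ^ 2 : ℝ) := by
      rw [inner_smul_right, ← inner_conj_symm, RCLike.mul_conj, RCLike.ofReal_pow]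
    rw [norm_sub_sq (𝕜 := 𝕜), hwc, RCLike.ofReal_re, norm_smul, hv]
    ring
  rw [hu, ← hnorm, Real.sqrt_sq (norm_nonneg _)]
  exact norm_inner_le_norm u _

lemma mem_Icc_of_inner_eq_of_norm_sq_le {v w : E} {x : ℝ} (hv : ‖v‖ = 1)
    (hvw : inner 𝕜 v w = x) (hw : ‖w‖ ^ 2 ≤ x) : x ∈ Set.Icc 0 1 := by
  have hx : x ^ 2 ≤ x := by
    have := norm_inner_le_norm (𝕜 := 𝕜) v w
    rw [hvw, RCLike.norm_ofReal, hv, one_mul] at this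
    nlinarith [abs_nonneg x, sq_abs x]
  constructor <;> nlinarith

lemma norm_inner_le_sqrt_mul_one_sub {u v w : E} {x : ℝ} (hv : ‖v‖ = 1) (huv : inner 𝕜 u v = 0)
    (hvw : inner 𝕜 v w = x) (hw : ‖w‖ ^ 2 ≤ x) :
    ‖inner 𝕜 u w‖ ≤ ‖u‖ * √(x * (1 - x)) := by
  refine (norm_inner_le_of_inner_eq_zero w hv huv).trans ?_
  gcongr
  rw [hvw, RCLike.norm_ofReal, sq_abs]
  linarith

end InnerProductSpace

lemma re_inner_I_smul_commutator {E : Type*} [NormedAddCommGroup E] [InnerProductSpace ℂ E]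
    [CompleteSpace E] {A P : E →L[ℂ] E} (hA : IsSelfAdjoint A) (hP : IsSelfAdjoint P) (v : E) :
    (inner ℂ v ((Complex.I • (A * P - P * A)) v)).re = -2 * (inner ℂ (A v) (P v)).im := by
  have hAP : inner ℂ v (A (P v)) = inner ℂ (A v) (P v) := (hA.isSymmetric v (P v)).symm
  have hPA : inner ℂ v (P (A v)) = starRingEnd ℂ (inner ℂ (A v) (P v)) := by
    rw [inner_conj_symm]; exact (hP.isSymmetric v (A v)).symm
  rw [_root_.smul_apply, _root_.sub_apply, mul_apply_eq_comp, mul_apply_eq_comp,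
    inner_smul_right, inner_sub_right, hAP, hPA]
  simp only [Complex.mul_re, Complex.I_re, Complex.I_im, Complex.sub_im, Complex.conj_im]
  ring

section PosSemidef

variable {n 𝕜 : Type*} [Fintype n] [DecidableEq n] [RCLike 𝕜] {A : Matrix n n 𝕜}

lemma Matrix.PosSemidef.eigenvalues_le_one (hA : A.PosSemidef) (htr : A.trace = 1) (i : n) :
    hA.1.eigenvalues i ≤ 1 := by
  have hsum : ∑ j, hA.1.eigenvalues j = 1 := by
    simpa using congrArg RCLike.re (hA.1.trace_eq_sum_eigenvalues.symm.trans htr)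
  exact hsum ▸ Finset.single_le_sum (fun j _ => hA.eigenvalues_nonneg j) (Finset.mem_univ i)

open scoped MatrixOrder in
lemma Matrix.PosSemidef.sub_mul_self (hA : A.PosSemidef) (htr : A.trace = 1) :
    (A - A * A).PosSemidef := by
  have hcfc : A - A * A = cfc (fun x : ℝ => x - x * x) A := by
    rw [cfc_sub _ _ A, cfc_mul _ _ A, cfc_id' ℝ A]
  rw [← nonneg_iff_posSemidef, hcfc]
  refine cfc_nonneg fun x hx => ?_
  obtain ⟨i, rfl⟩ := hA.1.spectrum_real_eq_range_eigenvalues ▸ hx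
  nlinarith [hA.eigenvalues_nonneg i, hA.eigenvalues_le_one htr i]

lemma Matrix.PosSemidef.norm_toEuclideanCLM_sq_le (hA : A.PosSemidef) (htr : A.trace = 1)
    (v : EuclideanSpace 𝕜 n) :
    ‖toEuclideanCLM (𝕜 := 𝕜) A v‖ ^ 2 ≤ RCLike.re (inner 𝕜 v (toEuclideanCLM (𝕜 := 𝕜) A v)) := by
  have hsymm := (hA.1.isSelfAdjoint.map (toEuclideanCLM (n := n) (𝕜 := 𝕜))).isSymmetric
  have hpos := (isPositive_toEuclideanLin_iff.mpr (hA.sub_mul_self htr)).re_inner_nonneg_right v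
  have hsq : inner 𝕜 v (toEuclideanCLM (𝕜 := 𝕜) A (toEuclideanCLM (𝕜 := 𝕜) A v)) =
      (‖toEuclideanCLM (𝕜 := 𝕜) A v‖ ^ 2 : ℝ) := by
    rw [RCLike.ofReal_pow, ← inner_self_eq_norm_sq_to_K]
    exact (hsymm v _).symm
  rw [← coe_toEuclideanCLM_eq_toEuclideanLin, ContinuousLinearMap.coe_coe, map_sub, map_mul,
    _root_.sub_apply, mul_apply_eq_comp, inner_sub_right, map_sub, hsq, RCLike.ofReal_re] at hpos
  linarith

end PosSemidef

section States

lemma trace_mul_outer (M : Matrix (Fin 4) (Fin 4) ℂ) (ξ : Fin 4 → ℂ) :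
    (M * outer ξ).trace = inner ℂ (toLp 2 ξ) (toEuclideanCLM (𝕜 := ℂ) M (toLp 2 ξ)) := by
  rw [outer, mul_vecMulVec, trace_vecMulVec]
  rfl

variable {ρ : Matrix (Fin 4) (Fin 4) ℂ} {ξ : Fin 4 → ℂ}

lemma IsState.inner_toEuclideanCLM_eq (hρ : IsState ρ) :
    inner ℂ (toLp 2 ξ) (toEuclideanCLM (𝕜 := ℂ) ρ (toLp 2 ξ)) = ((ρ * outer ξ).trace).re := by
  rw [trace_mul_outer]
  exact ((hρ.1.1.isSelfAdjoint.map toEuclideanCLM).isSymmetric.coe_re_inner_self_apply _).symm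

lemma IsState.norm_toEuclideanCLM_sq_le (hρ : IsState ρ) :
    ‖toEuclideanCLM (𝕜 := ℂ) ρ (toLp 2 ξ)‖ ^ 2 ≤ ((ρ * outer ξ).trace).re := by
  have h := hρ.1.norm_toEuclideanCLM_sq_le hρ.2 (toLp 2 ξ)
  rwa [hρ.inner_toEuclideanCLM_eq, RCLike.re_to_complex, Complex.ofReal_re] at h

lemma IsState.re_trace_mul_outer_mem_Icc (hρ : IsState ρ) (hξ : ‖toLp 2 ξ‖ = 1) :
    ((ρ * outer ξ).trace).re ∈ Set.Icc 0 1 :=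
  mem_Icc_of_inner_eq_of_norm_sq_le hξ hρ.inner_toEuclideanCLM_eq hρ.norm_toEuclideanCLM_sq_le

lemma IsState.abs_re_trace_commutator_mul_outer_le {H : Matrix (Fin 4) (Fin 4) ℂ}
    (hH : H.IsHermitian) (hρ : IsState ρ) (hξ : ‖toLp 2 ξ‖ = 1)
    (hHξ : inner ℂ (toEuclideanCLM (𝕜 := ℂ) H (toLp 2 ξ)) (toLp 2 ξ) = 0) :
    |((Complex.I • (H * ρ - ρ * H) * outer ξ).trace).re| ≤
      2 * ‖toEuclideanCLM (𝕜 := ℂ) H‖ *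
        √(((ρ * outer ξ).trace).re * (1 - ((ρ * outer ξ).trace).re)) := by
  set A := toEuclideanCLM (𝕜 := ℂ) H
  set v : EuclideanSpace ℂ (Fin 4) := toLp 2 ξ
  have hcomm : ((Complex.I • (H * ρ - ρ * H) * outer ξ).trace).re =
      -2 * (inner ℂ (A v) (toEuclideanCLM (𝕜 := ℂ) ρ v)).im := by
    rw [trace_mul_outer, map_smul, map_sub, map_mul, map_mul]
    exact re_inner_I_smul_commutator (hH.isSelfAdjoint.map _) (hρ.1.1.isSelfAdjoint.map _) v
  have hinner := norm_inner_le_sqrt_mul_one_sub (x := ((ρ * outer ξ).trace).re) hξ hHξ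
    hρ.inner_toEuclideanCLM_eq hρ.norm_toEuclideanCLM_sq_le
  have hAv : ‖A v‖ ≤ ‖A‖ := by simpa [hξ] using A.le_opNorm v
  rw [hcomm, abs_mul, abs_neg, abs_two, mul_assoc]
  gcongr
  exact (Complex.abs_im_le_norm _).trans
    (hinner.trans (mul_le_mul_of_nonneg_right hAv (Real.sqrt_nonneg _)))

end States

lemma H₁_eq : H₁ = !![0, 2 * Complex.I, 0, 0; -2 * Complex.I, 0, 0, 0;
    0, 0, 0, 4 * Complex.I; 0, 0, -4 * Complex.I, 0] := by
  ext i j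
  fin_cases i <;> fin_cases j <;>
    norm_num [H₁, kron, σz, σy, id2, Matrix.one_apply] <;> ring

lemma isHermitian_H₁ : H₁.IsHermitian := by
  rw [H₁_eq]
  ext i j
  fin_cases i <;> fin_cases j <;> simp

lemma H₁_ne_zero : H₁ ≠ 0 := by
  intro h
  simpa [H₁_eq] using congrFun (congrFun h 0) 1

lemma exists_eq_outer_of_mem_BellStates {ρbar : Matrix (Fin 4) (Fin 4) ℂ}
    (hbell : ρbar ∈ BellStates) :
    ∃ ξ : Fin 4 → ℂ, ρbar = outer ξ ∧ ‖(toLp 2 ξ : EuclideanSpace ℂ (Fin 4))‖ = 1 ∧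
      inner ℂ (toEuclideanCLM (𝕜 := ℂ) H₁ (toLp 2 ξ)) (toLp 2 ξ) = 0 := by
  rcases hbell with rfl | rfl | rfl | rfl <;> refine ⟨_, rfl, ?_, ?_⟩ <;>
    simp [EuclideanSpace.norm_eq, Fin.sum_univ_four, PsiPlus, PsiMinus, PhiPlus, PhiMinus,
      H₁_eq, EuclideanSpace.inner_toLp_toLp, dotProduct] <;> norm_num

section Feedback

variable {α β γ M s T : ℝ}

lemma mul_rpow_mul_abs_le (hα : 0 ≤ α) (hs : 0 ≤ s) (hβ : β + 1 / 2 ≠ 0)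
    (hT : |T| ≤ 2 * M * √s) : α * s ^ β * |T| ≤ 2 * α * M * s ^ (β + 1 / 2) := by
  rw [Real.rpow_add' hs hβ, ← Real.sqrt_eq_rpow]
  calc α * s ^ β * |T| ≤ α * s ^ β * (2 * M * √s) :=
        mul_le_mul_of_nonneg_left hT (by positivity)
    _ = 2 * α * M * (s ^ β * √s) := by ring

lemma feedback_mul_le (hα : 0 ≤ α) (hγ : 0 ≤ γ) (hs : 0 ≤ s) (hβ : β + 1 / 2 ≠ 0)
    (hT : |T| ≤ 2 * M * √s) : (α * s ^ β - γ * T) * T ≤ 2 * α * M * s ^ (β + 1 / 2) := by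
  have hle : α * s ^ β * T ≤ α * s ^ β * |T| :=
    mul_le_mul_of_nonneg_left (le_abs_self T) (by positivity)
  nlinarith [mul_rpow_mul_abs_le hα hs hβ hT, mul_nonneg hγ (sq_nonneg T)]

lemma abs_feedback_mul_le (hα : 0 ≤ α) (hγ : 0 ≤ γ) (hM : 0 ≤ M) (hs₀ : 0 ≤ s) (hs₁ : s ≤ 1)
    (hβ : 1 / 2 ≤ β) (hT : |T| ≤ 2 * M * √s) :
    |(α * s ^ β - γ * T) * T| ≤ (2 * α * M + 4 * γ * M ^ 2) * s := by
  have hT_sq : T ^ 2 ≤ 4 * M ^ 2 * s := by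
    calc T ^ 2 = |T| ^ 2 := (sq_abs T).symm
      _ ≤ (2 * M * √s) ^ 2 := pow_le_pow_left₀ (abs_nonneg T) hT 2
      _ = 4 * M ^ 2 * s := by rw [mul_pow, Real.sq_sqrt hs₀]; ring
  have hpow : s ^ (β + 1 / 2) ≤ s := by
    simpa using
      Real.rpow_le_rpow_of_exponent_ge' hs₀ hs₁ zero_le_one (by linarith : 1 ≤ β + 1 / 2)
  calc |(α * s ^ β - γ * T) * T| = |α * s ^ β * T - γ * T ^ 2| := by ring_nf
    _ ≤ |α * s ^ β * T| + |γ * T ^ 2| := abs_sub _ _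
    _ = α * s ^ β * |T| + γ * T ^ 2 := by
        rw [abs_mul, abs_of_nonneg (by positivity : 0 ≤ α * s ^ β),
          abs_of_nonneg (by positivity : 0 ≤ γ * T ^ 2)]
    _ ≤ 2 * α * M * s + γ * (4 * M ^ 2 * s) := by
        have h₁ := mul_rpow_mul_abs_le (β := β) hα hs₀ (by linarith) hT
        have h₂ : 2 * α * M * s ^ (β + 1 / 2) ≤ 2 * α * M * s :=
          mul_le_mul_of_nonneg_left hpow (by positivity)
        nlinarith [mul_le_mul_of_nonneg_left hT_sq hγ]
    _ = (2 * α * M + 4 * γ * M ^ 2) * s := by ring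

end Feedback

/-- properties of the feedback law
`u(ρ) = α(1 - X(ρ))^β - γ Tr(i[H₁,ρ]ρ̄)`, with `X(ρ) = Tr(ρρ̄)`,
`T(ρ) = Tr(i[H₁,ρ]ρ̄)` and `Θ_u(ρ) = u(ρ)T(ρ)`:
(i) `|Θ_u(ρ)| ≤ C(1 - X(ρ))` on `S` for some `C > 0`;
(ii) `Θ_u(ρ) ≤ 2α‖H₁‖(1 - X(ρ))^(β + 1/2)` on `S`;
(iii) `u(ρ) ≠ 0` whenever `X(ρ) = 0`. -/
theorem feedback_law_properties (ρbar : Matrix (Fin 4) (Fin 4) ℂ)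
    (hbell : ρbar ∈ BellStates) (α γ β : ℝ) (hα : 0 < α) (hγ : 0 < γ) (hβ : 1 < β)
    (X T u Θ : Matrix (Fin 4) (Fin 4) ℂ → ℝ)
    (hX : ∀ ρ, X ρ = ((ρ * ρbar).trace).re)
    (hT : ∀ ρ, T ρ = ((Complex.I • (H₁ * ρ - ρ * H₁) * ρbar).trace).re)
    (hu : ∀ ρ, u ρ = α * (1 - X ρ) ^ β - γ * T ρ)
    (hΘ : ∀ ρ, Θ ρ = u ρ * T ρ) :
    (∃ C > 0, ∀ ρ, IsState ρ → |Θ ρ| ≤ C * (1 - X ρ)) ∧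
    (∀ ρ, IsState ρ → Θ ρ ≤ 2 * α * ‖Matrix.toEuclideanCLM (𝕜 := ℂ) H₁‖ *
      (1 - X ρ) ^ (β + 1 / 2)) ∧
    (∀ ρ, IsState ρ → X ρ = 0 → u ρ ≠ 0) := by
  obtain ⟨ξ, rfl, hξ, hH₁ξ⟩ := exists_eq_outer_of_mem_BellStates hbell
  set M := ‖toEuclideanCLM (𝕜 := ℂ) H₁‖
  have hM : 0 < M :=
    norm_pos_iff.mpr ((map_ne_zero_iff _ toEuclideanCLM.injective).mpr H₁_ne_zero)
  have hX_mem : ∀ ρ, IsState ρ → X ρ ∈ Set.Icc 0 1 := fun ρ hρ =>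
    hX ρ ▸ hρ.re_trace_mul_outer_mem_Icc hξ
  have hT_le : ∀ ρ, IsState ρ → |T ρ| ≤ 2 * M * √(X ρ * (1 - X ρ)) := fun ρ hρ => by
    rw [hT, hX]
    exact hρ.abs_re_trace_commutator_mul_outer_le isHermitian_H₁ hξ hH₁ξ
  have hT_le_sqrt : ∀ ρ, IsState ρ → |T ρ| ≤ 2 * M * √(1 - X ρ) := fun ρ hρ => by
    obtain ⟨h₀, h₁⟩ := hX_mem ρ hρ
    refine (hT_le ρ hρ).trans ?_
    gcongr
    nlinarith
  refine ⟨⟨2 * α * M + 4 * γ * M ^ 2, by positivity, fun ρ hρ => ?_⟩, fun ρ hρ => ?_,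
    fun ρ hρ hX₀ => ?_⟩
  · rw [hΘ, hu]
    exact abs_feedback_mul_le hα.le hγ.le hM.le (sub_nonneg.mpr (hX_mem ρ hρ).2)
      (by linarith [(hX_mem ρ hρ).1]) (by linarith) (hT_le_sqrt ρ hρ)
  · rw [hΘ, hu]
    exact feedback_mul_le hα.le hγ.le (sub_nonneg.mpr (hX_mem ρ hρ).2) (by linarith)
      (hT_le_sqrt ρ hρ)
  · have hT₀ : T ρ = 0 := by simpa [hX₀] using hT_le ρ hρ
    simp [hu, hX₀, hT₀, hα.ne']
end
end
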